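/- Let Y be a metrizable topological space and (y_n) a sequence in Y. Then the following are equivalent: (a) for every nonempty open V ⊆ Y, the set {n : y_n ∈ V} has upper density equal to one; (b) for every nonempty open V ⊆ Y whose closure is not all of Y, the set {n : y_n ∈ V} has lower density equal to zero. -/

import Mathlib

open Filter Topology

open scoped Classical in
noncomputable def upperDensity (A : Set ℕ) : ℝ :=
  Filter.limsup (fun n => (((Finset.range n).filter (fun k => k ∈ A)).card : ℝ) / n) Filter.atTop

open scoped Classical in
noncomputable def lowerDensity (A : Set ℕ) : ℝ :=
  Filter.liminf (fun n => (((Finset.range n).filter (fun k => k ∈ A)).card : ℝ) / n) Filter.atTop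

open scoped Classical

noncomputable def dens (A : Set ℕ) (n : ℕ) : ℝ :=
  (((Finset.range n).filter (fun k => k ∈ A)).card : ℝ) / n

lemma dens_nonneg (A : Set ℕ) (n : ℕ) : 0 ≤ dens A n := by
  unfold dens; positivity

lemma dens_le_one (A : Set ℕ) (n : ℕ) : dens A n ≤ 1 := by
  unfold dens
  rcases Nat.eq_zero_or_pos n with rfl | hn
  · simp
  · rw [div_le_one (by exact_mod_cast hn)]
    exact_mod_cast (Finset.card_filter_le _ _).trans_eq (Finset.card_range n)

lemma dens_bddAbove (A : Set ℕ) : IsBoundedUnder (· ≤ ·) atTop (dens A) :=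
  isBoundedUnder_of ⟨1, dens_le_one A⟩

lemma dens_bddBelow (A : Set ℕ) : IsBoundedUnder (· ≥ ·) atTop (dens A) :=
  isBoundedUnder_of ⟨0, dens_nonneg A⟩

lemma dens_mono {A B : Set ℕ} (h : A ⊆ B) (n : ℕ) : dens A n ≤ dens B n := by
  unfold dens
  have hc : (((Finset.range n).filter (fun k => k ∈ A)).card : ℝ)
      ≤ ((Finset.range n).filter (fun k => k ∈ B)).card := by
    exact_mod_cast Finset.card_le_card (Finset.monotone_filter_right _ fun x _ hx => h hx)
  gcongr

lemma dens_compl (A : Set ℕ) {n : ℕ} (hn : 0 < n) : dens Aᶜ n = 1 - dens A n := by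
  unfold dens
  have hn' : (n : ℝ) ≠ 0 := by exact_mod_cast hn.ne'
  rw [eq_sub_iff_add_eq, ← add_div, div_eq_one_iff_eq hn']
  norm_cast
  rw [add_comm]
  have h := (Finset.card_filter_add_card_filter_not
    (s := Finset.range n) (p := fun k => k ∈ A)).trans (Finset.card_range n)
  convert h using 4 <;> exact Iff.rfl

lemma upperDensity_eq (A : Set ℕ) : upperDensity A = limsup (dens A) atTop := rfl
lemma lowerDensity_eq (A : Set ℕ) : lowerDensity A = liminf (dens A) atTop := rfl

lemma lowerDensity_compl (A : Set ℕ) : lowerDensity A = 1 - upperDensity Aᶜ := by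
  rw [lowerDensity_eq, upperDensity_eq]
  have h1 : liminf (dens A) atTop = liminf (fun n => 1 - dens Aᶜ n) atTop := by
    apply liminf_congr
    filter_upwards [eventually_gt_atTop 0] with n hn
    rw [dens_compl A hn]; ring
  rw [h1, liminf_const_sub atTop (dens Aᶜ) 1 (dens_bddAbove _)
    (dens_bddBelow _).isCoboundedUnder_le]

lemma upperDensity_le_one (A : Set ℕ) : upperDensity A ≤ 1 := by
  rw [upperDensity_eq]
  exact limsup_le_of_le (dens_bddBelow A).isCoboundedUnder_le
    (Eventually.of_forall fun n => dens_le_one A n)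

lemma lowerDensity_nonneg (A : Set ℕ) : 0 ≤ lowerDensity A := by
  rw [lowerDensity_eq]
  exact le_liminf_of_le (dens_bddAbove A).isCoboundedUnder_ge
    (Eventually.of_forall fun n => dens_nonneg A n)

lemma upperDensity_mono {A B : Set ℕ} (h : A ⊆ B) : upperDensity A ≤ upperDensity B := by
  rw [upperDensity_eq, upperDensity_eq]
  exact limsup_le_limsup (Eventually.of_forall fun n => dens_mono h n)
    (dens_bddBelow A).isCoboundedUnder_le (dens_bddAbove B)

lemma lowerDensity_mono {A B : Set ℕ} (h : A ⊆ B) : lowerDensity A ≤ lowerDensity B := by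
  rw [lowerDensity_eq, lowerDensity_eq]
  exact liminf_le_liminf (Eventually.of_forall fun n => dens_mono h n)
    (dens_bddBelow A) (dens_bddAbove B).isCoboundedUnder_ge

lemma upperDensity_univ : upperDensity (Set.univ : Set ℕ) = 1 := by
  rw [upperDensity_eq]
  have : limsup (dens Set.univ) atTop = limsup (fun _ : ℕ => (1 : ℝ)) atTop := by
    apply limsup_congr
    filter_upwards [eventually_gt_atTop 0] with n hn
    unfold dens
    simp [Finset.filter_true_of_mem, Finset.card_range,
      div_self (show (n : ℝ) ≠ 0 by exact_mod_cast hn.ne')]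
  rw [this, limsup_const]

theorem upperDensity_one_iff_lowerDensity_zero_nondense
    {Y : Type*} [TopologicalSpace Y] [TopologicalSpace.MetrizableSpace Y]
    (y : ℕ → Y) :
    (∀ V : Set Y, IsOpen V → V.Nonempty → upperDensity {n | y n ∈ V} = 1) ↔
    (∀ V : Set Y, IsOpen V → V.Nonempty → closure V ≠ Set.univ →
      lowerDensity {n | y n ∈ V} = 0) := by
  letI := TopologicalSpace.metrizableSpaceMetric Y
  constructor
  · intro ha V hV hVne hVcl
    set W := (closure V)ᶜ with hW
    have hWopen : IsOpen W := isClosed_closure.isOpen_compl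
    have hWne : W.Nonempty := Set.nonempty_compl.2 hVcl
    have hsub : {n | y n ∈ V} ⊆ {n | y n ∈ W}ᶜ := fun n hn hnW => hnW (subset_closure hn)
    have h1 : lowerDensity {n | y n ∈ V} ≤ lowerDensity ({n | y n ∈ W}ᶜ) :=
      lowerDensity_mono hsub
    have h2 : lowerDensity ({n | y n ∈ W}ᶜ) = 1 - upperDensity {n | y n ∈ W} := by
      rw [lowerDensity_compl, compl_compl]
    rw [ha W hWopen hWne] at h2
    have := lowerDensity_nonneg {n | y n ∈ V}
    linarith
  · intro hb V hV hVne
    obtain ⟨x, hx⟩ := hVne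
    obtain ⟨ε, hε, hball⟩ := Metric.isOpen_iff.1 hV x hx
    set U := Metric.ball x (ε / 2) with hU
    have hUopen : IsOpen U := Metric.isOpen_ball
    have hUne : U.Nonempty := Metric.nonempty_ball.2 (by linarith)
    have hUclsub : closure U ⊆ V := by
      refine subset_trans Metric.closure_ball_subset_closedBall (subset_trans ?_ hball)
      intro z hz
      exact lt_of_le_of_lt (Metric.mem_closedBall.1 hz) (by linarith)
    by_cases hcase : closure U = Set.univ
    · have hVuniv : V = Set.univ := Set.eq_univ_of_univ_subset (hcase ▸ hUclsub)
      rw [hVuniv]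
      have : {n | y n ∈ (Set.univ : Set Y)} = Set.univ := by ext n; simp
      rw [this, upperDensity_univ]
    · set W := (closure U)ᶜ with hWdef
      have hWopen : IsOpen W := isClosed_closure.isOpen_compl
      have hWne : W.Nonempty := Set.nonempty_compl.2 hcase
      have hWcl : closure W ≠ Set.univ := by
        rw [hWdef, closure_compl]
        intro h
        have hempty : interior (closure U) = ∅ := by
          have := congrArg (·ᶜ) h
          simpa using this
        have : U ⊆ interior (closure U) := interior_maximal subset_closure hUopen
        obtain ⟨z, hz⟩ := hUne
        exact absurd (this hz) (by simp [hempty])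
      have hb' := hb W hWopen hWne hWcl
      have h2 : upperDensity ({n | y n ∈ W}ᶜ) = 1 - lowerDensity {n | y n ∈ W} := by
        have := lowerDensity_compl {n | y n ∈ W}
        linarith
      rw [hb'] at h2
      have hsub : {n | y n ∈ W}ᶜ ⊆ {n | y n ∈ V} := by
        intro n hn
        have : y n ∈ closure U := not_not.1 hn
        exact hUclsub this
      have := upperDensity_mono hsub
      have := upperDensity_le_one {n | y n ∈ V}
      linarith
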